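/- arXiv:1805.09639 — 4 statements merged into one kernel-verified Lean document; each statement's English description precedes it below -/
import Mathlib

section
/- Let the iterates x₁,…,x_N and y₀,…,y_{N−1} be produced by a general multistep scheme driven by the linear fixed-point map g, let c ∈ ℝ^N with 1ᵀc = 1 be a minimizer of ‖Rc‖₂ over all vectors whose entries sum to one, and let y^extr = (Y − βR)c for some β ≠ 0. Then ‖(I−G)(y^extr − x*)‖₂ ≤ ‖I − β(I−G)‖₂ · min{ ‖p(G)(I−G)(x₀ − x*)‖₂ : p a real polynomial with deg p ≤ N−1 and p(1) = 1 }, where ‖·‖₂ on matrices is the spectral norm. -/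
/-!
For the linear map `g`, every iterate satisfies `yᵢ - x* = qᵢ(G)(y₀ - x*)` for a polynomial `qᵢ`
built from the scheme's coefficients; `Σⱼ (αⱼ + βⱼ) = 1` gives `qᵢ(1) = 1`, and `αᵢ⁽ⁱ⁾ ≠ 0` makes
`deg qᵢ = i`. Hence `q₀, …, q_{N-1}` is a basis of the polynomials of degree `< N`, so any `p` with
`p(1) = 1` is `Σ c'ⱼ qⱼ` with `Σ c'ⱼ = 1`, and then `R c' = p(G)(I - G)(x₀ - x*)`. Since the
columns of `R` are `(I - G)(yⱼ - x*)` and `Σ cⱼ = 1`, also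
`(I - G)(y^extr - x*) = (I - β(I - G)) R c`; the minimality of `‖R c‖` concludes.
-/

open Matrix Polynomial

noncomputable def vecNorm {n : ℕ} (v : Fin n → ℝ) : ℝ := Real.sqrt (∑ i, v i ^ 2)

/-- Spectral norm of a rectangular real matrix: supremum of `‖Av‖₂` over the Euclidean
unit ball. -/
noncomputable def specNorm {m n : ℕ} (A : Matrix (Fin m) (Fin n) ℝ) : ℝ :=
  sSup ((fun v => vecNorm (A.mulVec v)) '' {v | vecNorm v ≤ 1})

theorem vecNorm_eq_norm_toLp {n : ℕ} (v : Fin n → ℝ) : vecNorm v = ‖WithLp.toLp 2 v‖ := by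
  simp [vecNorm, EuclideanSpace.norm_eq]

section L2OpNorm

open scoped Matrix.Norms.L2Operator

theorem specNorm_eq_l2_opNorm {m n : ℕ} (A : Matrix (Fin m) (Fin n) ℝ) : specNorm A = ‖A‖ := by
  rw [l2_opNorm_def, ← ContinuousLinearMap.sSup_unitClosedBall_eq_norm, specNorm]
  congr 1
  ext r
  constructor
  · rintro ⟨v, hv, rfl⟩
    exact ⟨WithLp.toLp 2 v, by simpa [vecNorm_eq_norm_toLp] using hv,
      (vecNorm_eq_norm_toLp _).symm⟩
  · rintro ⟨v, hv, rfl⟩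
    exact ⟨v.ofLp, by simpa [vecNorm_eq_norm_toLp] using hv,
      vecNorm_eq_norm_toLp _⟩

theorem specNorm_nonneg {m n : ℕ} (A : Matrix (Fin m) (Fin n) ℝ) : 0 ≤ specNorm A :=
  specNorm_eq_l2_opNorm A ▸ norm_nonneg A

theorem vecNorm_mulVec_le {m n : ℕ} (A : Matrix (Fin m) (Fin n) ℝ) (v : Fin n → ℝ) :
    vecNorm (A *ᵥ v) ≤ specNorm A * vecNorm v := by
  simpa [specNorm_eq_l2_opNorm, vecNorm_eq_norm_toLp] using A.l2_opNorm_mulVec (WithLp.toLp 2 v)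

end L2OpNorm

theorem Matrix.of_columns_mulVec {m n R : Type*} [Fintype n] [CommSemiring R] (f : n → m → R)
    (w : n → R) : (Matrix.of fun r j => f j r) *ᵥ w = ∑ j, w j • f j := by
  ext r
  simp [mulVec, dotProduct, mul_comm]

open Finset in
theorem Finset.sum_Icc_one_eq_sum_fin {M : Type*} [AddCommMonoid M] (f : ℕ → M) (n : ℕ) :
    ∑ j ∈ Icc 1 n, f j = ∑ j : Fin n, f (j + 1) := by
  rw [Fin.sum_univ_eq_sum_range (fun j => f (j + 1)), range_eq_Ico, sum_Ico_add']
  rfl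

section ResidualPoly

variable {K : Type*} [CommRing K] (α β : ℕ → ℕ → K)

noncomputable def residualPoly : ℕ → K[X]
  | 0 => 1
  | i + 1 => ∑ j : Fin (i + 1), (C (α (i + 1) (j + 1)) * X + C (β (i + 1) (j + 1))) * residualPoly j

variable {α β}

theorem residualPoly_eval_one (hsum : ∀ i, 1 ≤ i → ∑ j ∈ Finset.Icc 1 i, (α i j + β i j) = 1) :
    ∀ i, (residualPoly α β i).eval 1 = 1
  | 0 => by simp [residualPoly]
  | i + 1 => by
    have ih (j : Fin (i + 1)) := residualPoly_eval_one hsum j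
    calc _ = ∑ j : Fin (i + 1), (α (i + 1) (j + 1) + β (i + 1) (j + 1)) := by
          simp [residualPoly, eval_finsetSum, ih]
      _ = 1 := by
          rw [← Finset.sum_Icc_one_eq_sum_fin fun j => α (i + 1) j + β (i + 1) j]
          exact hsum _ (by omega)

theorem sub_eq_aeval_residualPoly {V : Type*} [AddCommGroup V] [Module K V] (g : Module.End K V)
    {xstar : V} {x y : ℕ → V}
    (hx : ∀ i, 1 ≤ i → x i = xstar + g (y (i - 1) - xstar))
    (hy : ∀ i, 1 ≤ i → y i = ∑ j ∈ Finset.Icc 1 i, (α i j • x j + β i j • y (j - 1)))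
    (hsum : ∀ i, 1 ≤ i → ∑ j ∈ Finset.Icc 1 i, (α i j + β i j) = 1) :
    ∀ i, y i - xstar = aeval g (residualPoly α β i) (y 0 - xstar)
  | 0 => by simp [residualPoly]
  | i + 1 => by
    have ih (j : Fin (i + 1)) := sub_eq_aeval_residualPoly g hx hy hsum j
    have hterm : ∀ j ∈ Finset.Icc 1 (i + 1),
        α (i + 1) j • x j + β (i + 1) j • y (j - 1) - (α (i + 1) j + β (i + 1) j) • xstar
          = (α (i + 1) j • g + β (i + 1) j • 1) (y (j - 1) - xstar) := by
      intro j hj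
      rw [hx j (Finset.mem_Icc.1 hj).1]
      simp only [LinearMap.add_apply, LinearMap.smul_apply, Module.End.one_apply]
      module
    calc y (i + 1) - xstar
        = ∑ j ∈ Finset.Icc 1 (i + 1), (α (i + 1) j • g + β (i + 1) j • 1) (y (j - 1) - xstar) := by
          rw [hy _ (by omega), ← Finset.sum_congr rfl hterm, Finset.sum_sub_distrib,
            ← Finset.sum_smul, hsum _ (by omega), one_smul]
      _ = aeval g (residualPoly α β (i + 1)) (y 0 - xstar) := by
          rw [Finset.sum_Icc_one_eq_sum_fin, residualPoly, map_sum, LinearMap.sum_apply]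
          refine Finset.sum_congr rfl fun j _ => ?_
          simp [ih j, Algebra.smul_def]

end ResidualPoly

section ResidualPolyField

variable {K : Type*} [Field K] {α β : ℕ → ℕ → K}

theorem degree_residualPoly (hα : ∀ i, 1 ≤ i → α i i ≠ 0) :
    ∀ i, (residualPoly α β i).degree = i
  | 0 => by simp [residualPoly]
  | i + 1 => by
    have ih (j : ℕ) (hj : j < i + 1) := degree_residualPoly hα j
    have hlast : ((C (α (i + 1) (i + 1)) * X + C (β (i + 1) (i + 1))) * residualPoly α β i).degree
        = ↑(i + 1) := by
      rw [degree_mul, degree_linear (hα _ (by omega)), ih i (by omega)]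
      norm_cast
      omega
    -- only the last summand reaches degree `i + 1`
    rw [residualPoly, Fin.sum_univ_castSucc, degree_add_eq_right_of_degree_lt] <;>
      simp only [Fin.val_last, Fin.val_castSucc, hlast]
    refine (degree_sum_le _ _).trans_lt ((Finset.sup_lt_iff (by simp)).2 fun j _ => ?_)
    calc _ ≤ 1 + ((j : ℕ) : WithBot ℕ) :=
          (degree_mul_le _ _).trans (add_le_add degree_linear_le (ih j (by omega)).le)
      _ < ↑(i + 1) := by norm_cast; omega

noncomputable def residualPolySequence (hα : ∀ i, 1 ≤ i → α i i ≠ 0) : Polynomial.Sequence K where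
  elems' := residualPoly α β
  degree_eq' := degree_residualPoly hα

theorem exists_sum_smul_residualPoly_eq (hα : ∀ i, 1 ≤ i → α i i ≠ 0) {N : ℕ} {p : K[X]}
    (hp : p.degree < N) : ∃ c : Fin N → K, ∑ j, c j • residualPoly α β j = p := by
  set S := residualPolySequence (β := β) hα
  have hmem : p ∈ Submodule.span K (Set.range (S ∘ Fin.val (n := N))) := by
    rw [Set.range_comp, Fin.range_val,
      S.span_degreeLT fun i _ => (leadingCoeff_ne_zero.2 (S.ne_zero i)).isUnit]
    exact mem_degreeLT.2 hp
  exact (Submodule.mem_span_range_iff_exists_fun K).1 hmem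

end ResidualPolyField

section LinearScheme

variable {K : Type*} [CommRing K] {n : Type*} [Fintype n] [DecidableEq n] {G : Matrix n n K}
  {xstar : n → K} {x y : ℕ → n → K} {N : ℕ}

theorem sub_eq_aeval_residualPoly_mulVec {α β : ℕ → ℕ → K}
    (hx : ∀ i, 1 ≤ i → x i = xstar + G *ᵥ (y (i - 1) - xstar))
    (hy : ∀ i, 1 ≤ i → y i = ∑ j ∈ Finset.Icc 1 i, (α i j • x j + β i j • y (j - 1)))
    (hsum : ∀ i, 1 ≤ i → ∑ j ∈ Finset.Icc 1 i, (α i j + β i j) = 1) (i : ℕ) :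
    y i - xstar = aeval G (residualPoly α β i) *ᵥ (y 0 - xstar) := by
  simpa [toLinAlgEquiv'_apply, aeval_algHom_apply] using
    sub_eq_aeval_residualPoly (toLinAlgEquiv' G) (by simpa [toLinAlgEquiv'_apply] using hx)
      hy hsum i

theorem residuals_mulVec (hx : ∀ i, 1 ≤ i → x i = xstar + G *ᵥ (y (i - 1) - xstar))
    (w : Fin N → K) :
    (of fun r (j : Fin N) => (y j - x (j + 1)) r) *ᵥ w = ∑ j, w j • ((1 - G) *ᵥ (y j - xstar)) := by
  have hres (j : ℕ) : y j - x (j + 1) = (1 - G) *ᵥ (y j - xstar) := by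
    rw [hx _ (by omega), Nat.add_sub_cancel, sub_mulVec, one_mulVec]
    abel
  simp only [of_columns_mulVec, hres]

theorem residuals_mulVec_eq_aeval {α β : ℕ → ℕ → K}
    (hx : ∀ i, 1 ≤ i → x i = xstar + G *ᵥ (y (i - 1) - xstar))
    (hy : ∀ i, 1 ≤ i → y i = ∑ j ∈ Finset.Icc 1 i, (α i j • x j + β i j • y (j - 1)))
    (hsum : ∀ i, 1 ≤ i → ∑ j ∈ Finset.Icc 1 i, (α i j + β i j) = 1) (w : Fin N → K) :
    (of fun r (j : Fin N) => (y j - x (j + 1)) r) *ᵥ w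
      = aeval G (∑ j, w j • residualPoly α β j) *ᵥ ((1 - G) *ᵥ (y 0 - xstar)) := by
  set q := aeval G (∑ j, w j • residualPoly α β j)
  have hcomm : Commute (1 - G) q := by
    have hA : aeval G (1 - X : K[X]) = 1 - G := by rw [map_sub, map_one, aeval_X]
    exact hA ▸ (Commute.all _ _).map (aeval G)
  calc _ = ∑ j, w j • ((1 - G) *ᵥ (aeval G (residualPoly α β j) *ᵥ (y 0 - xstar))) := by
        rw [residuals_mulVec hx]
        exact Finset.sum_congr rfl fun j _ => by rw [sub_eq_aeval_residualPoly_mulVec hx hy hsum j]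
    _ = (1 - G) *ᵥ (q *ᵥ (y 0 - xstar)) := by
        simp only [q, map_sum, map_smul, sum_mulVec, mulVec_sum, smul_mulVec, mulVec_smul]
    _ = _ := by rw [mulVec_mulVec, mulVec_mulVec, hcomm.eq]

theorem residual_extrapolation_eq (hx : ∀ i, 1 ≤ i → x i = xstar + G *ᵥ (y (i - 1) - xstar))
    {Y R : Matrix n (Fin N) K} (hY : Y = of fun r (j : Fin N) => y j r)
    (hR : R = of fun r (j : Fin N) => (y j - x (j + 1)) r)
    {c : Fin N → K} (hc : ∑ j, c j = 1) (β : K) :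
    (1 - G) *ᵥ ((Y - β • R) *ᵥ c - xstar) = (1 - β • (1 - G)) *ᵥ (R *ᵥ c) := by
  have hYc : (1 - G) *ᵥ (Y *ᵥ c - xstar) = R *ᵥ c := by
    have hcomb : Y *ᵥ c - xstar = ∑ j, c j • (y j - xstar) := by
      simp [hY, of_columns_mulVec, smul_sub, Finset.sum_sub_distrib, ← Finset.sum_smul, hc]
    rw [hcomb, hR, residuals_mulVec hx, mulVec_sum]
    simp only [mulVec_smul]
  have hsplit : (Y - β • R) *ᵥ c - xstar = (Y *ᵥ c - xstar) - β • R *ᵥ c := by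
    rw [sub_mulVec, smul_mulVec]
    abel
  rw [hsplit, mulVec_sub, hYc, mulVec_smul, sub_mulVec 1 (β • (1 - G)), one_mulVec, smul_mulVec]

end LinearScheme

theorem rna_offline_bound_general
    (d N : ℕ) (hN : 1 ≤ N)
    (G : Matrix (Fin d) (Fin d) ℝ)
    (xstar : Fin d → ℝ)
    (x y : ℕ → Fin d → ℝ)
    (α' β' : ℕ → ℕ → ℝ)
    (h0 : x 0 = y 0)
    (hx : ∀ i, 1 ≤ i → x i = xstar + G.mulVec (y (i - 1) - xstar))
    (hy : ∀ i, 1 ≤ i → y i = ∑ j ∈ Finset.Icc 1 i, (α' i j • x j + β' i j • y (j - 1)))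
    (hsum : ∀ i, 1 ≤ i → ∑ j ∈ Finset.Icc 1 i, (α' i j + β' i j) = 1)
    (hα : ∀ i, 1 ≤ i → α' i i ≠ 0)
    (Y X R : Matrix (Fin d) (Fin N) ℝ)
    (hY : Y = Matrix.of fun r (j : Fin N) => y (j : ℕ) r)
    (hX : X = Matrix.of fun r (j : Fin N) => x ((j : ℕ) + 1) r)
    (hR : R = Y - X)
    (c : Fin N → ℝ) (hc1 : ∑ j, c j = 1)
    (hcmin : ∀ c' : Fin N → ℝ, (∑ j, c' j = 1) →
      vecNorm (R.mulVec c) ≤ vecNorm (R.mulVec c'))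
    (β : ℝ)
    (yextr : Fin d → ℝ) (hyextr : yextr = (Y - β • R).mulVec c) :
    ∀ p : Polynomial ℝ, p.degree ≤ ((N - 1 : ℕ) : WithBot ℕ) → p.eval 1 = 1 →
      vecNorm (((1 : Matrix (Fin d) (Fin d) ℝ) - G).mulVec (yextr - xstar)) ≤
        specNorm ((1 : Matrix (Fin d) (Fin d) ℝ) - β • ((1 : Matrix (Fin d) (Fin d) ℝ) - G)) *
          vecNorm ((Polynomial.aeval G p).mulVec
            (((1 : Matrix (Fin d) (Fin d) ℝ) - G).mulVec (x 0 - xstar))) := by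
  intro p hdeg hp1
  have hRcols : R = of fun r (j : Fin N) => (y j - x (j + 1)) r := by
    rw [hR, hY, hX]
    rfl
  obtain ⟨c', hc'⟩ := exists_sum_smul_residualPoly_eq (β := β') hα (p := p)
    (hdeg.trans_lt (by exact_mod_cast (by omega : N - 1 < N)))
  have hc'1 : ∑ j, c' j = 1 := by
    simpa [← hc', eval_finsetSum, residualPoly_eval_one hsum] using hp1
  rw [hyextr, residual_extrapolation_eq hx hY hRcols hc1, h0, ← hc',
    ← residuals_mulVec_eq_aeval hx hy hsum, ← hRcols]
  exact (vecNorm_mulVec_le _ _).trans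
    (mul_le_mul_of_nonneg_left (hcmin c' hc'1) (specNorm_nonneg _))

/-- for iterates of a general multistep scheme driven by the linear fixed-point map
`g(x) = G(x−x*)+x*`, if `c` sums to one and minimizes `‖Rc‖₂` over sum-one vectors and
`y^extr = (Y − βR)c`, then `‖(I−G)(y^extr−x*)‖₂` is bounded by
`‖I − β(I−G)‖₂ · min_{deg p ≤ N−1, p(1)=1} ‖p(G)(I−G)(x₀−x*)‖₂`. -/
theorem rna_offline_bound
    (d N : ℕ) (hd : 1 ≤ d) (hN : 1 ≤ N) (κ : ℝ) (hκ0 : 0 < κ) (hκ1 : κ < 1)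
    (G : Matrix (Fin d) (Fin d) ℝ)
    (hGpsd : G.PosSemidef)
    (hGub : ((1 - κ) • (1 : Matrix (Fin d) (Fin d) ℝ) - G).PosSemidef)
    (xstar : Fin d → ℝ)
    (x y : ℕ → Fin d → ℝ)
    (α' β' : ℕ → ℕ → ℝ)
    (h0 : x 0 = y 0)
    (hx : ∀ i, 1 ≤ i → x i = xstar + G.mulVec (y (i - 1) - xstar))
    (hy : ∀ i, 1 ≤ i → y i = ∑ j ∈ Finset.Icc 1 i, (α' i j • x j + β' i j • y (j - 1)))
    (hsum : ∀ i, 1 ≤ i → ∑ j ∈ Finset.Icc 1 i, (α' i j + β' i j) = 1)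
    (hα : ∀ i, 1 ≤ i → α' i i ≠ 0)
    (Y X R : Matrix (Fin d) (Fin N) ℝ)
    (hY : Y = Matrix.of fun r (j : Fin N) => y (j : ℕ) r)
    (hX : X = Matrix.of fun r (j : Fin N) => x ((j : ℕ) + 1) r)
    (hR : R = Y - X)
    (c : Fin N → ℝ) (hc1 : ∑ j, c j = 1)
    (hcmin : ∀ c' : Fin N → ℝ, (∑ j, c' j = 1) →
      vecNorm (R.mulVec c) ≤ vecNorm (R.mulVec c'))
    (β : ℝ) (hβ : β ≠ 0)
    (yextr : Fin d → ℝ) (hyextr : yextr = (Y - β • R).mulVec c) :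
    ∀ p : Polynomial ℝ, p.degree ≤ ((N - 1 : ℕ) : WithBot ℕ) → p.eval 1 = 1 →
      vecNorm (((1 : Matrix (Fin d) (Fin d) ℝ) - G).mulVec (yextr - xstar)) ≤
        specNorm ((1 : Matrix (Fin d) (Fin d) ℝ) - β • ((1 : Matrix (Fin d) (Fin d) ℝ) - G)) *
          vecNorm ((Polynomial.aeval G p).mulVec
            (((1 : Matrix (Fin d) (Fin d) ℝ) - G).mulVec (x 0 - xstar))) :=
  rna_offline_bound_general d N hN G xstar x y α' β' h0 hx hy hsum hα Y X R hY hX hR c hc1 hcmin β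
    yextr hyextr
end

section
/- Let G be a real d×d matrix, x* ∈ ℝ^d, and X* ∈ ℝ^{d×N} the matrix all of whose columns equal x*. Suppose X̃, Ỹ ∈ ℝ^{d×N} and E ∈ ℝ^{d×N} satisfy X̃ = X* + G(Ỹ − X*) + E, and set R̃ = Ỹ − X̃. Then for every c ∈ ℝ^N with 1ᵀc = 1 and every β ∈ ℝ: (I − G)·((Ỹ − βR̃)c − x*) = (I − β(I−G))·R̃c + Ec. -/
open Matrix

/-- if `X̃ = X* + G(Ỹ − X*) + E` and `R̃ = Ỹ − X̃`, then for every sum-one `c` and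
every `β`, `(I−G)((Ỹ − βR̃)c − x*) = (I − β(I−G))R̃c + Ec`. -/
theorem perturbed_residual_decomposition
    (d N : ℕ) (G : Matrix (Fin d) (Fin d) ℝ)
    (xstar : Fin d → ℝ)
    (Xt Yt E : Matrix (Fin d) (Fin N) ℝ)
    (hXt : Xt = (Matrix.of fun r (_ : Fin N) => xstar r) +
      G * (Yt - Matrix.of fun r (_ : Fin N) => xstar r) + E) :
    ∀ (c : Fin N → ℝ), (∑ j, c j = 1) → ∀ β : ℝ,
      ((1 : Matrix (Fin d) (Fin d) ℝ) - G).mulVec ((Yt - β • (Yt - Xt)).mulVec c - xstar) =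
        ((1 : Matrix (Fin d) (Fin d) ℝ) -
            β • ((1 : Matrix (Fin d) (Fin d) ℝ) - G)).mulVec ((Yt - Xt).mulVec c) +
          E.mulVec c := by
  intro c hc β
  subst hXt
  set Xs : Matrix (Fin d) (Fin N) ℝ := Matrix.of fun r (_ : Fin N) => xstar r with hXs
  have hXsc : Xs.mulVec c = xstar := by
    funext r
    simp [hXs, Matrix.mulVec, dotProduct, ← Finset.mul_sum, hc]
  have key : ∀ (M : Matrix (Fin d) (Fin N) ℝ), (G * M).mulVec c = G.mulVec (M.mulVec c) :=
    fun M => (Matrix.mulVec_mulVec c G M).symm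
  simp only [Matrix.sub_mulVec, Matrix.add_mulVec, Matrix.smul_mulVec,
    Matrix.mulVec_sub, Matrix.mulVec_add, Matrix.mulVec_smul, key, hXsc,
    Matrix.one_mulVec, Matrix.smul_mulVec, Matrix.mulVec_smul]
  module
end

section
/- Let G be a real symmetric d×d matrix with 0 ⪯ G ⪯ (1−κ)·I, 0 < κ < 1, let r₀ ∈ ℝ^d, and let R ∈ ℝ^{d×N} be the matrix whose j-th column is p_{j−1}(G)·r₀ for j = 1,…,N, where each p_j is a real polynomial of degree exactly j with p_j(1) = 1 (and p_0 = 1). If R has full column rank, then RᵀR is positive definite, 1ᵀ(RᵀR)⁻¹1 > 0, and the last coordinate of the vector c = (RᵀR)⁻¹1 / (1ᵀ(RᵀR)⁻¹1) is nonzero. -/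
/-!
If the last weight vanished, `P = ∑ wⱼ pⱼ` would have degree `< N - 1`, so `(X - 1) P` has
degree `< N` and equals some `∑ aⱼ pⱼ`, with `∑ aⱼ = ((X - 1) P)(1) = 0` because `pⱼ(1) = 1`.
Evaluating at `G` gives `R a = (G - 1) v` with `v = R w`, while `RᵀR w = 1` gives
`⟪R a, v⟫ = ∑ aⱼ = 0`. Thus `⟪(1 - G) v, v⟫ = 0`, and `1 - G ⪰ κ I` forces `v = 0`,
contradicting `RᵀR w = 1`.
-/

open Matrix Polynomial

namespace Polynomial

theorem mem_span_range_of_degree_eq {K : Type*} [Field K] {n : ℕ} {p : ℕ → K[X]}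
    (hp : ∀ j < n, (p j).degree = j) {q : K[X]} (hq : q.degree < n) :
    q ∈ Submodule.span K (Set.range fun j : Fin n => p j) := by
  let S : Sequence K := ⟨fun i => if i < n then p i else X ^ i, fun i => by
    split_ifs with h
    exacts [hp i h, degree_X_pow i]⟩
  have hS : S '' Set.Iio n = Set.range fun j : Fin n => p j := by
    ext q
    simp only [Set.mem_image, Set.mem_Iio, Set.mem_range]
    constructor
    · rintro ⟨i, hi, rfl⟩
      exact ⟨⟨i, hi⟩, by simp [S, hi]⟩
    · rintro ⟨j, rfl⟩
      exact ⟨j, j.isLt, by simp [S]⟩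
  rw [← hS, S.span_degreeLT fun i _ => (leadingCoeff_ne_zero.mpr (S.ne_zero i)).isUnit]
  exact mem_degreeLT.mpr hq

theorem exists_sum_eq_zero_and_sum_smul_eq_X_sub_one_mul {K : Type*} [Field K] {n : ℕ}
    {p : ℕ → K[X]} (hp : ∀ j : Fin (n + 1), (p j).degree = (j : ℕ))
    (hp1 : ∀ j : Fin (n + 1), (p j).eval 1 = 1) {w : Fin (n + 1) → K}
    (hw : w (Fin.last n) = 0) :
    ∃ a : Fin (n + 1) → K, ∑ j, a j = 0 ∧ ∑ j, a j • p j = (X - 1) * ∑ j, w j • p j := by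
  have hP : (∑ j, w j • p j).degree < n := by
    rw [← mem_degreeLT, Fin.sum_univ_castSucc, hw, zero_smul, add_zero]
    refine Submodule.sum_mem _ fun j _ => Submodule.smul_mem _ _ (mem_degreeLT.mpr ?_)
    rw [hp, Fin.val_castSucc]
    exact_mod_cast j.isLt
  have hQ : ((X - 1) * ∑ j, w j • p j).degree < ↑(n + 1) := by
    rw [← C_1, degree_mul, degree_X_sub_C, add_comm, Nat.cast_succ]
    exact WithBot.add_lt_add_right WithBot.one_ne_bot hP
  obtain ⟨a, ha⟩ := (Submodule.mem_span_range_iff_exists_fun K).mp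
    (mem_span_range_of_degree_eq (fun j hj => hp ⟨j, hj⟩) hQ)
  refine ⟨a, ?_, ha⟩
  simpa [eval_finsetSum, hp1] using congrArg (eval 1) ha

end Polynomial

namespace Matrix

theorem mulVec_injective_of_rank_eq_card {K m n : Type*} [Field K] [Fintype n]
    {A : Matrix m n K} (h : A.rank = Fintype.card n) : Function.Injective A.mulVec := by
  have hdim := LinearMap.finrank_range_add_finrank_ker A.mulVecLin
  rw [← rank, h, Module.finrank_fintype_fun_eq_card, add_eq_left,
    Submodule.finrank_eq_zero, LinearMap.ker_eq_bot] at hdim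
  exact hdim

theorem mulVec_eq_aeval_sum_smul {K m ι : Type*} [CommRing K] [Fintype m] [DecidableEq m]
    [Fintype ι] {G : Matrix m m K} {r₀ : m → K} {p : ι → K[X]} {R : Matrix m ι K}
    (hR : ∀ j, (fun i => R i j) = aeval G (p j) *ᵥ r₀) (a : ι → K) :
    R *ᵥ a = aeval G (∑ j, a j • p j) *ᵥ r₀ := by
  ext i
  simp only [map_sum, map_smul, sum_mulVec, smul_mulVec, ← hR]
  simp [mulVec, dotProduct, mul_comm]

theorem posDef_one_sub_of_posSemidef_smul_one_sub {m : Type*} [Fintype m] [DecidableEq m]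
    {G : Matrix m m ℝ} {κ : ℝ} (hκ : 0 < κ) (hG : ((1 - κ) • 1 - G).PosSemidef) :
    (1 - G).PosDef := by
  have h : 1 - G = ((1 - κ) • 1 - G) + κ • 1 := by module
  rw [h]
  exact PosDef.posSemidef_add hG (PosDef.one.smul hκ)

theorem last_ne_zero_of_transpose_mul_self_mulVec_eq_one {m : Type*} [Fintype m]
    [DecidableEq m] {n : ℕ} {G : Matrix m m ℝ} (hG : (1 - G).PosDef) {r₀ : m → ℝ}
    {p : ℕ → ℝ[X]} (hp : ∀ j : Fin (n + 1), (p j).degree = (j : ℕ))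
    (hp1 : ∀ j : Fin (n + 1), (p j).eval 1 = 1) {R : Matrix m (Fin (n + 1)) ℝ}
    (hR : ∀ j : Fin (n + 1), (fun i => R i j) = aeval G (p j) *ᵥ r₀) {w : Fin (n + 1) → ℝ}
    (hw : (Rᵀ * R) *ᵥ w = fun _ => 1) :
    w (Fin.last n) ≠ 0 := by
  intro hlast
  obtain ⟨a, ha_sum, ha⟩ := exists_sum_eq_zero_and_sum_smul_eq_X_sub_one_mul hp hp1 hlast
  set v := R *ᵥ w with hv_def
  have hgram : ∀ x, (R *ᵥ x) ⬝ᵥ v = ∑ j, x j := fun x => by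
    rw [← vecMul_transpose, ← dotProduct_mulVec, mulVec_mulVec, hw]
    simp [dotProduct]
  have hRa : R *ᵥ a = (G - 1) *ᵥ v := by
    rw [mulVec_eq_aeval_sum_smul hR, ha, map_mul, ← mulVec_mulVec,
      ← mulVec_eq_aeval_sum_smul hR, map_sub, aeval_X, map_one]
  have hv : v = 0 := by
    by_contra hv
    have hpos := hG.dotProduct_mulVec_pos hv
    rw [star_trivial, ← neg_sub, neg_mulVec, dotProduct_neg, dotProduct_comm, ← hRa, hgram,
      ha_sum, neg_zero] at hpos
    exact hpos.false
  have h0 := congrFun hw 0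
  rw [← mulVec_mulVec, ← hv_def, hv] at h0
  simp at h0

end Matrix

/-- if the columns of `R` are `p_{j−1}(G)r₀` with `p_j` of degree exactly `j` and
`p_j(1) = 1`, and `R` has full column rank, then `RᵀR` is positive definite, `1ᵀ(RᵀR)⁻¹1 > 0`,
and the last coordinate of `c = (RᵀR)⁻¹1/(1ᵀ(RᵀR)⁻¹1)` is nonzero. -/
theorem anderson_last_weight_nonzero
    (d N : ℕ) (hN : 1 ≤ N) (κ : ℝ) (hκ0 : 0 < κ)
    (G : Matrix (Fin d) (Fin d) ℝ)
    (hGub : ((1 - κ) • (1 : Matrix (Fin d) (Fin d) ℝ) - G).PosSemidef)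
    (r0 : Fin d → ℝ)
    (p : ℕ → Polynomial ℝ)
    (hpdeg : ∀ j : Fin N, (p j).degree = ((j : ℕ) : WithBot ℕ))
    (hp1 : ∀ j : Fin N, (p j).eval 1 = 1)
    (R : Matrix (Fin d) (Fin N) ℝ)
    (hR : ∀ j : Fin N, (fun r => R r j) = (Polynomial.aeval G (p (j : ℕ))).mulVec r0)
    (hrank : R.rank = N) :
    (Rᵀ * R).PosDef ∧
    0 < ∑ j, (Rᵀ * R)⁻¹.mulVec (fun _ => (1 : ℝ)) j ∧
    ((∑ j, (Rᵀ * R)⁻¹.mulVec (fun _ => (1 : ℝ)) j)⁻¹ •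
        (Rᵀ * R)⁻¹.mulVec (fun _ => (1 : ℝ))) ⟨N - 1, by omega⟩ ≠ 0 := by
  obtain ⟨n, rfl⟩ : ∃ n, N = n + 1 := ⟨N - 1, by omega⟩
  have hA : (Rᵀ * R).PosDef := by
    simpa using PosDef.conjTranspose_mul_self R (mulVec_injective_of_rank_eq_card (by simpa))
  have hAw : (Rᵀ * R) *ᵥ ((Rᵀ * R)⁻¹ *ᵥ fun _ => 1) = fun _ => 1 := by
    rw [mulVec_mulVec, mul_nonsing_inv _ hA.det_pos.ne'.isUnit, one_mulVec]
  have hsum : 0 < ∑ j, ((Rᵀ * R)⁻¹ *ᵥ fun _ => 1) j := by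
    simpa [dotProduct] using
      hA.inv.dotProduct_mulVec_pos (x := fun _ => 1) (Function.ne_iff.mpr ⟨0, one_ne_zero⟩)
  refine ⟨hA, hsum, ?_⟩
  rw [show (⟨n + 1 - 1, _⟩ : Fin (n + 1)) = Fin.last n from Fin.ext (by simp)]
  exact smul_ne_zero (inv_ne_zero hsum.ne') <| last_ne_zero_of_transpose_mul_self_mulVec_eq_one
    (posDef_one_sub_of_posSemidef_smul_one_sub hκ0 hGub) hpdeg hp1 hR hAw
end

section
/- Let G be a real symmetric d×d matrix with 0 ⪯ G ⪯ (1−κ)·I, 0 < κ < 1, x* ∈ ℝ^d, and let y₀,…,y_{N−1} satisfy y_j − x* = p_j(G)(x₀ − x*) for polynomials p_j of degree exactly j with p_j(1) = 1. Let R ∈ ℝ^{d×N} have j-th column (I−G)(y_{j−1} − x*). If R does not have full column rank, then there exists c ∈ ℝ^N with 1ᵀc = 1 and Rc = 0; moreover, for any such c and any β ∈ ℝ, the extrapolated point y^extr = (Y − βR)c (with Y = [y₀,…,y_{N−1}]) equals x*. -/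
open Matrix Polynomial

private lemma indep_aux (N : ℕ) (p : ℕ → Polynomial ℝ)
    (hdeg : ∀ j, j < N → (p j).degree = (j : ℕ)) (c : Fin N → ℝ)
    (hc : ∑ j : Fin N, c j • p (j : ℕ) = 0) : c = 0 := by
  by_contra hne
  have hex : ∃ j, c j ≠ 0 := by
    by_contra h
    push_neg at h
    exact hne (funext fun j => h j)
  set F := Finset.univ.filter (fun j : Fin N => c j ≠ 0) with hF
  have hFne : F.Nonempty := by
    obtain ⟨j, hj⟩ := hex
    exact ⟨j, by simp [hF, hj]⟩
  obtain ⟨jm, hjmF, hjm⟩ := F.exists_max_image (fun j => (j : ℕ)) hFne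
  have hcjm : c jm ≠ 0 := by simpa [hF] using hjmF
  have h0 : (∑ j : Fin N, c j • p (j : ℕ)).coeff (jm : ℕ) = 0 := by rw [hc]; simp
  rw [finset_sum_coeff] at h0
  have hsingle : ∑ j : Fin N, (c j • p (j : ℕ)).coeff (jm : ℕ)
      = c jm * (p (jm : ℕ)).coeff (jm : ℕ) := by
    rw [Finset.sum_eq_single jm]
    · rw [coeff_smul]; rfl
    · intro j _ hjne
      rcases eq_or_ne (c j) 0 with h | h
      · simp [coeff_smul, h]
      · have hjF : j ∈ F := by simp [hF, h]
        have hlt : (j : ℕ) < (jm : ℕ) :=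
          lt_of_le_of_ne (hjm j hjF) (fun e => hjne (Fin.ext e))
        have : (p (j : ℕ)).coeff (jm : ℕ) = 0 := by
          apply coeff_eq_zero_of_degree_lt
          rw [hdeg _ j.isLt]
          exact_mod_cast hlt
        simp [coeff_smul, this]
    · simp
  rw [hsingle] at h0
  have hpne : p (jm : ℕ) ≠ 0 := by
    intro h
    have hd := hdeg _ jm.isLt
    rw [h, degree_zero] at hd
    exact (by simp : (⊥ : WithBot ℕ) ≠ ((jm : ℕ) : WithBot ℕ)) hd
  have hnd : (p (jm : ℕ)).natDegree = (jm : ℕ) := natDegree_eq_of_degree_eq_some (hdeg _ jm.isLt)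
  have hco : (p (jm : ℕ)).coeff (jm : ℕ) ≠ 0 := by
    have h := leadingCoeff_ne_zero.mpr hpne
    rwa [Polynomial.leadingCoeff, hnd] at h
  exact (mul_ne_zero hcjm hco) h0

private lemma span_aux (N : ℕ) (p : ℕ → Polynomial ℝ)
    (hdeg : ∀ j, j < N → (p j).degree = (j : ℕ)) :
    ∀ (n : ℕ) (s : Polynomial ℝ), s.natDegree = n → s.degree < (N : ℕ) →
      ∃ b : Fin N → ℝ, ∑ j : Fin N, b j • p (j : ℕ) = s := by
  intro n
  induction n using Nat.strong_induction_on with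
  | _ n IH =>
    intro s hsn hsN
    by_cases h0 : s = 0
    · exact ⟨0, by simp [h0]⟩
    have hdegs : s.degree = (s.natDegree : ℕ) := degree_eq_natDegree h0
    have hkN : s.natDegree < N := by
      rw [hdegs] at hsN
      exact_mod_cast hsN
    have hpk0 : p s.natDegree ≠ 0 := by
      intro h
      have hd := hdeg _ hkN
      rw [h, degree_zero] at hd
      exact (by simp : (⊥ : WithBot ℕ) ≠ ((s.natDegree : ℕ) : WithBot ℕ)) hd
    have hndk : (p s.natDegree).natDegree = s.natDegree := natDegree_eq_of_degree_eq_some (hdeg _ hkN)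
    have hlpk : (p s.natDegree).coeff s.natDegree ≠ 0 := by
      have h := leadingCoeff_ne_zero.mpr hpk0
      rwa [Polynomial.leadingCoeff, hndk] at h
    set k := s.natDegree with hk
    set a := s.coeff k / (p k).coeff k with ha
    set t := s - a • p k with ht
    have hdt : t.degree < (k : ℕ) := by
      rw [degree_lt_iff_coeff_zero]
      intro m hm
      rcases eq_or_lt_of_le hm with h | h
      · rw [ht]
        simp only [coeff_sub, coeff_smul, smul_eq_mul, ← h, ha]
        rw [div_mul_cancel₀ _ hlpk]
        ring
      · rw [ht]
        have h1 : s.coeff m = 0 := coeff_eq_zero_of_natDegree_lt (by omega)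
        have h2 : (p k).coeff m = 0 := by
          apply coeff_eq_zero_of_degree_lt
          rw [hdeg _ hkN]
          exact_mod_cast h
        simp [coeff_sub, coeff_smul, h1, h2]
    obtain ⟨b, hb⟩ : ∃ b : Fin N → ℝ, ∑ j : Fin N, b j • p (j : ℕ) = t := by
      by_cases ht0 : t = 0
      · exact ⟨0, by simp [ht0]⟩
      · refine IH t.natDegree ?_ t rfl ?_
        · rw [← hsn]
          exact (natDegree_lt_iff_degree_lt ht0).mpr hdt
        · exact hdt.trans (by exact_mod_cast hkN)
    refine ⟨fun j => b j + (Pi.single (⟨k, hkN⟩ : Fin N) a : Fin N → ℝ) j, ?_⟩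
    have hsingle : ∑ j : Fin N, (Pi.single (⟨k, hkN⟩ : Fin N) a : Fin N → ℝ) j • p (j : ℕ)
        = a • p k := by
      rw [Finset.sum_eq_single (⟨k, hkN⟩ : Fin N)]
      · simp
      · intro j _ hj
        rw [Pi.single_eq_of_ne hj]
        simp
      · simp
    have : ∑ j : Fin N, (b j + (Pi.single (⟨k, hkN⟩ : Fin N) a : Fin N → ℝ) j) • p (j : ℕ)
        = (∑ j : Fin N, b j • p (j : ℕ)) + ∑ j : Fin N, (Pi.single (⟨k, hkN⟩ : Fin N) a : Fin N → ℝ) j • p (j : ℕ) := by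
      rw [← Finset.sum_add_distrib]
      refine Finset.sum_congr rfl fun j _ => ?_
      simp [add_smul]
    rw [this, hb, hsingle, ht]
    abel

private lemma mulVec_eq_sum_cols {d N : ℕ} (W : Matrix (Fin d) (Fin N) ℝ) (c : Fin N → ℝ) :
    W.mulVec c = ∑ j : Fin N, c j • (fun i => W i j) := by
  funext r
  simp [Matrix.mulVec, dotProduct, Finset.sum_apply, mul_comm]

private lemma sum_smul_mulVec {d N : ℕ} (M : Fin N → Matrix (Fin d) (Fin d) ℝ)
    (c : Fin N → ℝ) (v : Fin d → ℝ) :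
    (∑ j : Fin N, c j • M j).mulVec v = ∑ j : Fin N, c j • (M j).mulVec v := by
  funext r
  simp only [Matrix.mulVec, dotProduct, Finset.sum_apply, Matrix.sum_apply, Matrix.smul_apply,
    Pi.smul_apply, smul_eq_mul, Finset.sum_mul, Finset.mul_sum]
  rw [Finset.sum_comm]
  refine Finset.sum_congr rfl fun j _ => Finset.sum_congr rfl fun i _ => by ring

/-- if the residual matrix `R` (with `j`-th column `(I−G)(y_{j−1}−x*)`, the
iterates satisfying `y_j − x* = p_j(G)(x₀−x*)`) does not have full column rank, then some
sum-one `c` satisfies `Rc = 0`, and for any such `c` and any `β` the extrapolated point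
`(Y − βR)c` equals `x*`. -/
theorem rank_deficient_gives_exact_solution
    (d N : ℕ) (hN : 1 ≤ N) (κ : ℝ) (hκ0 : 0 < κ) (hκ1 : κ < 1)
    (G : Matrix (Fin d) (Fin d) ℝ)
    (hGpsd : G.PosSemidef)
    (hGub : ((1 - κ) • (1 : Matrix (Fin d) (Fin d) ℝ) - G).PosSemidef)
    (xstar x0 : Fin d → ℝ)
    (y : ℕ → Fin d → ℝ)
    (p : ℕ → Polynomial ℝ)
    (hpdeg : ∀ j : Fin N, (p j).degree = ((j : ℕ) : WithBot ℕ))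
    (hp1 : ∀ j : Fin N, (p j).eval 1 = 1)
    (hy : ∀ j : Fin N, y (j : ℕ) - xstar = (Polynomial.aeval G (p (j : ℕ))).mulVec (x0 - xstar))
    (R : Matrix (Fin d) (Fin N) ℝ)
    (hR : ∀ j : Fin N,
      (fun r => R r j) = ((1 : Matrix (Fin d) (Fin d) ℝ) - G).mulVec (y (j : ℕ) - xstar))
    (hrank : R.rank ≠ N) :
    (∃ c : Fin N → ℝ, (∑ j, c j = 1) ∧ R.mulVec c = 0) ∧
    ∀ c : Fin N → ℝ, (∑ j, c j = 1) → R.mulVec c = 0 → ∀ β : ℝ,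
      ((Matrix.of fun r (j : Fin N) => y (j : ℕ) r) - β • R).mulVec c = xstar := by
  classical
  set A := (1 : Matrix (Fin d) (Fin d) ℝ) - G with hAdef
  set v := x0 - xstar with hvdef
  have hdeg' : ∀ j, j < N → (p j).degree = (j : ℕ) := fun j hj => hpdeg ⟨j, hj⟩
  -- A is positive definite, hence invertible
  have hApos : A.PosDef := by
    have h1 : A = ((1 - κ) • (1 : Matrix (Fin d) (Fin d) ℝ) - G)
        + κ • (1 : Matrix (Fin d) (Fin d) ℝ) := by
      rw [hAdef]; module
    rw [h1]
    refine Matrix.PosDef.posSemidef_add hGub ?_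
    rw [Matrix.smul_one_eq_diagonal]
    exact Matrix.PosDef.diagonal fun _ => hκ0
  have injA : Function.Injective A.mulVec :=
    Matrix.mulVec_injective_iff_isUnit.mpr hApos.isUnit
  -- the matrix W of iterate errors
  set W : Matrix (Fin d) (Fin N) ℝ := Matrix.of (fun r (j : Fin N) => y (j : ℕ) r - xstar r)
    with hWdef
  have hWcol : ∀ j : Fin N, (fun i => W i j) = (Polynomial.aeval G (p (j : ℕ))).mulVec v := by
    intro j
    funext i
    have := congrFun (hy j) i
    simpa [hWdef, hvdef] using this
  have hRW : R = A * W := by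
    ext r j
    rw [congrFun (hR j) r]
    simp [Matrix.mul_apply, Matrix.mulVec, dotProduct, hWdef, hAdef]
  have hWc : ∀ c : Fin N → ℝ,
      W.mulVec c = (Polynomial.aeval G (∑ j : Fin N, c j • p (j : ℕ))).mulVec v := by
    intro c
    have h1 : Polynomial.aeval G (∑ j : Fin N, c j • p (j : ℕ))
        = ∑ j : Fin N, c j • Polynomial.aeval G (p (j : ℕ)) := by
      rw [map_sum]
      exact Finset.sum_congr rfl fun j _ => map_smul _ _ _
    rw [h1, sum_smul_mulVec, mulVec_eq_sum_cols]
    exact Finset.sum_congr rfl fun j _ => by rw [hWcol j]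
  have hRc : ∀ c : Fin N → ℝ, R.mulVec c = A.mulVec (W.mulVec c) := by
    intro c
    rw [hRW, ← Matrix.mulVec_mulVec]
  constructor
  · -- existence of sum-one kernel vector
    have hker : LinearMap.ker R.mulVecLin ≠ ⊥ := by
      intro hbot
      apply hrank
      have hinj := LinearMap.ker_eq_bot.mp hbot
      have h := LinearMap.finrank_range_of_inj hinj
      show Module.finrank ℝ (LinearMap.range R.mulVecLin) = N
      rw [h]
      simp [Module.finrank_pi]
    obtain ⟨c₀, hc₀mem, hc₀ne⟩ := (Submodule.ne_bot_iff _).mp hker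
    have hc₀0 : R.mulVec c₀ = 0 := hc₀mem
    set q₀ : Polynomial ℝ := ∑ j : Fin N, c₀ j • p (j : ℕ) with hq₀def
    have hq₀ : q₀ ≠ 0 := fun h => hc₀ne (indep_aux N p hdeg' c₀ (hq₀def ▸ h))
    have hv0 : (Polynomial.aeval G q₀).mulVec v = 0 := by
      apply injA
      rw [Matrix.mulVec_zero, ← hWc, ← hRc, hc₀0]
    obtain ⟨s, hqs, hnd⟩ := q₀.exists_eq_pow_rootMultiplicity_mul_and_not_dvd hq₀ 1
    set k := q₀.rootMultiplicity 1 with hkdef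
    have hs1 : s.eval 1 ≠ 0 := fun h => hnd (dvd_iff_isRoot.mpr h)
    have hGI : IsUnit (G - 1 : Matrix (Fin d) (Fin d) ℝ) := by
      have : (G - 1 : Matrix (Fin d) (Fin d) ℝ) = -A := by rw [hAdef]; module
      rw [this]
      exact hApos.isUnit.neg
    have haq : Polynomial.aeval G q₀
        = (G - 1) ^ k * Polynomial.aeval G s := by
      conv_lhs => rw [hqs]
      rw [_root_.map_mul, _root_.map_pow]
      congr 1
      simp [map_sub]
    have hsv : (Polynomial.aeval G s).mulVec v = 0 := by
      have hinj2 : Function.Injective ((G - 1 : Matrix (Fin d) (Fin d) ℝ) ^ k).mulVec :=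
        Matrix.mulVec_injective_iff_isUnit.mpr (hGI.pow _)
      apply hinj2
      rw [Matrix.mulVec_mulVec, ← haq, hv0, Matrix.mulVec_zero]
    have hdegs : s.degree < (N : ℕ) := by
      have h1 : s ∣ q₀ := ⟨(X - C 1) ^ k, by rw [hqs]; ring⟩
      have h2 := degree_le_of_dvd h1 hq₀
      have h3 : q₀.degree < (N : ℕ) := by
        refine lt_of_le_of_lt (degree_sum_le _ _) ?_
        rw [Finset.sup_lt_iff (by exact WithBot.bot_lt_coe N)]
        intro j _
        refine lt_of_le_of_lt (degree_smul_le _ _) ?_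
        rw [hpdeg j]
        exact_mod_cast j.isLt
      exact lt_of_le_of_lt h2 h3
    obtain ⟨b, hb⟩ := span_aux N p hdeg' s.natDegree s rfl hdegs
    have hsum_b : ∑ j : Fin N, b j = s.eval 1 := by
      have h := congrArg (Polynomial.eval 1) hb
      rw [Polynomial.eval_finset_sum] at h
      simp only [Polynomial.eval_smul, smul_eq_mul] at h
      rw [← h]
      exact Finset.sum_congr rfl fun j _ => by rw [hp1 j, mul_one]
    refine ⟨fun j => (s.eval 1)⁻¹ * b j, ?_, ?_⟩
    · rw [← Finset.mul_sum, hsum_b, inv_mul_cancel₀ hs1]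
    · rw [hRc, hWc]
      have hcomb : ∑ j : Fin N, ((s.eval 1)⁻¹ * b j) • p (j : ℕ) = (s.eval 1)⁻¹ • s := by
        rw [← hb, Finset.smul_sum]
        exact Finset.sum_congr rfl fun j _ => by rw [mul_smul]
      rw [hcomb, _root_.map_smul, Matrix.smul_mulVec, hsv, smul_zero, Matrix.mulVec_zero]
  · -- any sum-one kernel vector gives the exact solution
    intro c hcsum hc0 β
    have hW0 : W.mulVec c = 0 := by
      apply injA
      rw [Matrix.mulVec_zero, ← hRc, hc0]
    rw [Matrix.sub_mulVec, Matrix.smul_mulVec, hc0, smul_zero, sub_zero]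
    funext r
    have h2 : ∑ j : Fin N, (y (j : ℕ) r - xstar r) * c j = 0 := by
      have := congrFun hW0 r
      simpa [Matrix.mulVec, dotProduct, hWdef] using this
    have h3 : ∑ j : Fin N, y (j : ℕ) r * c j = xstar r := by
      have h4 : ∑ j : Fin N, y (j : ℕ) r * c j
          = (∑ j : Fin N, (y (j : ℕ) r - xstar r) * c j) + ∑ j : Fin N, xstar r * c j := by
        rw [← Finset.sum_add_distrib]
        exact Finset.sum_congr rfl fun j _ => by ring
      rw [h4, h2, zero_add, ← Finset.mul_sum, hcsum, mul_one]
    simpa [Matrix.mulVec, dotProduct] using h3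
end
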